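/- arXiv:2103.14722 — 4 statements merged into one kernel-verified Lean document; each statement's English description precedes it below -/
import Mathlib

section
/- Let V : ℝ^n → ℝ be convex with V(0) = 0, and suppose there are constants a, c₁, c₂ > 0 with c₁‖y‖^a ≤ V(y) ≤ c₂‖y‖^a for all y. Let f̂ : ℝ^n → ℝ^n, let β ∈ (0,1), and define f : ℝ^n → ℝ^n by f(x) = f̂(x) if V(f̂(x)) ≤ β·V(x), and f(x) = (β·V(x)/V(f̂(x)))·f̂(x) otherwise. Then every trajectory x_{t+1} = f(x_t) satisfies ‖x_t‖^a ≤ (c₂/c₁)·β^t·‖x_0‖^a for all t ∈ ℕ; i.e., the origin is globally exponentially stable for the dynamics f. -/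
/-!
When `f̂ x` fails the decrease condition `V (f̂ x) ≤ β V x`, the model rescales it by
`λ = β V x / V (f̂ x) ∈ [0, 1)`; convexity of `V` together with `V 0 = 0` gives
`V (λ y) ≤ λ V y`, so in both cases `V (f x) ≤ β V x`. Iterating, `V (x t) ≤ β ^ t V (x 0)`,
and the sandwich `c₁ ‖y‖ ^ a ≤ V y ≤ c₂ ‖y‖ ^ a` turns this into the bound on norms.
-/

open Set

section
variable {E : Type*} [AddCommGroup E] [Module ℝ E] {V : E → ℝ}

theorem ConvexOn.map_smul_le_of_map_zero (hV : ConvexOn ℝ univ V) (hV0 : V 0 = 0)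
    {l : ℝ} (hl0 : 0 ≤ l) (hl1 : l ≤ 1) (y : E) : V (l • y) ≤ l * V y := by
  simpa [hV0] using hV.2 (mem_univ y) (mem_univ 0) hl0 (sub_nonneg.2 hl1) (add_sub_cancel l 1)

theorem ConvexOn.map_div_smul_le (hV : ConvexOn ℝ univ V) (hV0 : V 0 = 0)
    {c : ℝ} {y : E} (hc : 0 ≤ c) (hcy : c < V y) : V ((c / V y) • y) ≤ c := by
  have hVy : 0 < V y := hc.trans_lt hcy
  calc V ((c / V y) • y) ≤ c / V y * V y :=
        hV.map_smul_le_of_map_zero hV0 (by positivity) ((div_le_one hVy).2 hcy.le) y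
    _ = c := div_mul_cancel₀ c hVy.ne'

theorem ConvexOn.map_rescaled_le_mul (hV : ConvexOn ℝ univ V) (hV0 : V 0 = 0)
    (hVnn : ∀ y, 0 ≤ V y) {β : ℝ} (hβ : 0 ≤ β) {fhat f : E → E}
    (hf₁ : ∀ x, V (fhat x) ≤ β * V x → f x = fhat x)
    (hf₂ : ∀ x, ¬ V (fhat x) ≤ β * V x → f x = (β * V x / V (fhat x)) • fhat x) (x : E) :
    V (f x) ≤ β * V x := by
  by_cases hdecr : V (fhat x) ≤ β * V x
  · rwa [hf₁ x hdecr]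
  · rw [hf₂ x hdecr]
    exact hV.map_div_smul_le hV0 (mul_nonneg hβ (hVnn x)) (not_le.1 hdecr)

end

theorem stmt_4_general {n : ℕ} (V : EuclideanSpace ℝ (Fin n) → ℝ)
    (hV : ConvexOn ℝ Set.univ V) (hV0 : V 0 = 0)
    (a c₁ c₂ : ℝ) (hc₁ : 0 < c₁)
    (hVlb : ∀ y, c₁ * ‖y‖ ^ a ≤ V y) (hVub : ∀ y, V y ≤ c₂ * ‖y‖ ^ a)
    (fhat : EuclideanSpace ℝ (Fin n) → EuclideanSpace ℝ (Fin n))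
    (β : ℝ) (hβ : β ∈ Set.Ioo (0 : ℝ) 1)
    (f : EuclideanSpace ℝ (Fin n) → EuclideanSpace ℝ (Fin n))
    (hf₁ : ∀ x, V (fhat x) ≤ β * V x → f x = fhat x)
    (hf₂ : ∀ x, ¬ V (fhat x) ≤ β * V x → f x = (β * V x / V (fhat x)) • fhat x) :
    ∀ x : ℕ → EuclideanSpace ℝ (Fin n), (∀ t, x (t + 1) = f (x t)) →
      ∀ t, ‖x t‖ ^ a ≤ (c₂ / c₁) * β ^ t * ‖x 0‖ ^ a := by
  intro x hx t
  have hβ0 : 0 ≤ β := hβ.1.le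
  have hVnn : ∀ y, 0 ≤ V y := fun y => (by positivity : 0 ≤ c₁ * ‖y‖ ^ a).trans (hVlb y)
  have hVt : V (x t) ≤ β ^ t * V (x 0) := le_geom (u := V ∘ x) hβ0 t fun k _ => by
    simpa only [Function.comp, hx k] using hV.map_rescaled_le_mul hV0 hVnn hβ0 hf₁ hf₂ (x k)
  rw [show c₂ / c₁ * β ^ t * ‖x 0‖ ^ a = β ^ t * (c₂ * ‖x 0‖ ^ a) / c₁ by ring, le_div_iff₀' hc₁]
  calc c₁ * ‖x t‖ ^ a ≤ V (x t) := hVlb _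
    _ ≤ β ^ t * V (x 0) := hVt
    _ ≤ β ^ t * (c₂ * ‖x 0‖ ^ a) := by gcongr; exact hVub _

/-- Global exponential stability of the convexity-based stable dynamic model:
every trajectory of `f` satisfies `‖x t‖ ^ a ≤ (c₂ / c₁) * β ^ t * ‖x 0‖ ^ a`. -/
theorem stmt_4 {n : ℕ} (V : EuclideanSpace ℝ (Fin n) → ℝ)
    (hV : ConvexOn ℝ Set.univ V) (hV0 : V 0 = 0)
    (a c₁ c₂ : ℝ) (ha : 0 < a) (hc₁ : 0 < c₁) (hc₂ : 0 < c₂)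
    (hVlb : ∀ y, c₁ * ‖y‖ ^ a ≤ V y) (hVub : ∀ y, V y ≤ c₂ * ‖y‖ ^ a)
    (fhat : EuclideanSpace ℝ (Fin n) → EuclideanSpace ℝ (Fin n))
    (β : ℝ) (hβ : β ∈ Set.Ioo (0 : ℝ) 1)
    (f : EuclideanSpace ℝ (Fin n) → EuclideanSpace ℝ (Fin n))
    (hf₁ : ∀ x, V (fhat x) ≤ β * V x → f x = fhat x)
    (hf₂ : ∀ x, ¬ V (fhat x) ≤ β * V x → f x = (β * V x / V (fhat x)) • fhat x) :
    ∀ x : ℕ → EuclideanSpace ℝ (Fin n), (∀ t, x (t + 1) = f (x t)) →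
      ∀ t, ‖x t‖ ^ a ≤ (c₂ / c₁) * β ^ t * ‖x 0‖ ^ a :=
  stmt_4_general V hV hV0 a c₁ c₂ hc₁ hVlb hVub fhat β hβ f hf₁ hf₂
end

section
/- Let V : ℝ^n → ℝ and f̂ : ℝ^n → ℝ^n be continuously differentiable, let β ∈ (0,1), and let x₀ ∈ ℝ^n and γ₀ ∈ ℝ satisfy V(γ₀·f̂(x₀)) = β·V(x₀) and ⟪∇V(γ₀·f̂(x₀)), f̂(x₀)⟫ ≠ 0. Then there exist an open neighborhood U of x₀ and a continuously differentiable function φ : U → ℝ such that φ(x₀) = γ₀ and V(φ(x)·f̂(x)) = β·V(x) for all x ∈ U. -/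
/-!
Apply the implicit function theorem to `F (x, γ) = V (γ • f̂ x) - β * V x`. By the chain rule
its partial derivative in `γ` at `(x₀, γ₀)` is `⟪∇V (γ₀ • f̂ x₀), f̂ x₀⟫ ≠ 0`, and since `C¹`
at a point is an open condition, the implicit function is `C¹` on a whole neighbourhood of `x₀`.
-/

open scoped InnerProductSpace

section ImplicitFunction

variable {𝕜 : Type*} [RCLike 𝕜]
  {E : Type*} [NormedAddCommGroup E] [NormedSpace 𝕜 E] [CompleteSpace E]

theorem ContinuousLinearMap.isInvertible_of_apply_one_ne_zero {g : 𝕜 →L[𝕜] 𝕜} (hg : g 1 ≠ 0) :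
    g.IsInvertible :=
  ⟨ContinuousLinearEquiv.unitsEquivAut 𝕜 (Units.mk0 _ hg), by ext; simp⟩

theorem ContDiffAt.exists_isOpen_contDiffOn_implicitFunction
    {E₂ : Type*} [NormedAddCommGroup E₂] [NormedSpace 𝕜 E₂] [CompleteSpace E₂]
    {F : Type*} [NormedAddCommGroup F] [NormedSpace 𝕜 F] [CompleteSpace F]
    {f : E × E₂ → F} {u : E × E₂} {n : ℕ} (hf : ContDiffAt 𝕜 n f u) (hn : n ≠ 0)
    (hinv : (fderiv 𝕜 f u ∘L .inr 𝕜 E E₂).IsInvertible) :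
    ∃ U : Set E, IsOpen U ∧ u.1 ∈ U ∧ ∃ φ : E → E₂,
      ContDiffOn 𝕜 n φ U ∧ φ u.1 = u.2 ∧ ∀ x ∈ U, f (x, φ x) = f u := by
  have hn' : (n : WithTop ℕ∞) ≠ 0 := by exact_mod_cast hn
  obtain ⟨U, hU, hUo, hu⟩ := eventually_nhds_iff.1
    (((hf.contDiffAt_implicitFunction hn' hinv).eventually (by simp)).and
      (hf.eventually_apply_implicitFunction hn' hinv))
  exact ⟨U, hUo, hu, hf.implicitFunction hn' hinv, fun x hx => (hU x hx).1.contDiffWithinAt,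
    hf.implicitFunction_apply_self hn' hinv, fun x hx => (hU x hx).2⟩

theorem ContDiffAt.exists_isOpen_contDiffOn_implicitFunction_of_hasDerivAt
    {f : E × 𝕜 → 𝕜} {u : E × 𝕜} {n : ℕ} {c : 𝕜} (hf : ContDiffAt 𝕜 n f u) (hn : n ≠ 0)
    (hc : HasDerivAt (fun t => f (u.1, t)) c u.2) (hc₀ : c ≠ 0) :
    ∃ U : Set E, IsOpen U ∧ u.1 ∈ U ∧ ∃ φ : E → 𝕜,
      ContDiffOn 𝕜 n φ U ∧ φ u.1 = u.2 ∧ ∀ x ∈ U, f (x, φ x) = f u := by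
  refine hf.exists_isOpen_contDiffOn_implicitFunction hn
    (ContinuousLinearMap.isInvertible_of_apply_one_ne_zero ?_)
  have hslice : HasDerivAt (fun t => f (u.1, t)) ((fderiv 𝕜 f u ∘L .inr 𝕜 E 𝕜) 1) u.2 :=
    ((hf.differentiableAt (by exact_mod_cast hn)).hasFDerivAt.comp u.2
      (hasFDerivAt_prodMk_right u.1 u.2)).hasDerivAt
  rwa [← hc.unique hslice]

end ImplicitFunction

theorem HasGradientAt.hasDerivAt_comp_smul_const
    {E : Type*} [NormedAddCommGroup E] [InnerProductSpace ℝ E] [CompleteSpace E]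
    {V : E → ℝ} {g v : E} {t : ℝ} (h : HasGradientAt V g (t • v)) :
    HasDerivAt (fun s : ℝ => V (s • v)) ⟪g, v⟫_ℝ t := by
  have hline : HasDerivAt (fun s : ℝ => s • v) v t := by
    simpa using (hasDerivAt_id t).smul_const v
  exact (hasGradientAt_iff_hasFDerivAt.1 h).comp_hasDerivAt t hline

theorem stmt_8_general {n : ℕ} (V : EuclideanSpace ℝ (Fin n) → ℝ)
    (fhat : EuclideanSpace ℝ (Fin n) → EuclideanSpace ℝ (Fin n))
    (hV : ContDiff ℝ 1 V) (hfhat : ContDiff ℝ 1 fhat)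
    (β : ℝ)
    (x₀ : EuclideanSpace ℝ (Fin n)) (γ₀ : ℝ)
    (hroot : V (γ₀ • fhat x₀) = β * V x₀)
    (hgrad : (inner ℝ (gradient V (γ₀ • fhat x₀)) (fhat x₀) : ℝ) ≠ 0) :
    ∃ U : Set (EuclideanSpace ℝ (Fin n)), IsOpen U ∧ x₀ ∈ U ∧
      ∃ φ : EuclideanSpace ℝ (Fin n) → ℝ, ContDiffOn ℝ 1 φ U ∧ φ x₀ = γ₀ ∧
        ∀ x ∈ U, V (φ x • fhat x) = β * V x := by
  set F : EuclideanSpace ℝ (Fin n) × ℝ → ℝ := fun p => V (p.2 • fhat p.1) - β * V p.1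
  have hF : ContDiff ℝ 1 F :=
    (hV.comp (contDiff_snd.smul (hfhat.comp contDiff_fst))).sub
      (contDiff_const.mul (hV.comp contDiff_fst))
  have hslice : HasDerivAt (fun t => F (x₀, t)) ⟪gradient V (γ₀ • fhat x₀), fhat x₀⟫_ℝ γ₀ :=
    ((hV.differentiable one_ne_zero (γ₀ • fhat x₀)).hasGradientAt.hasDerivAt_comp_smul_const
      ).sub_const (β * V x₀)
  obtain ⟨U, hUo, hx₀, φ, hφ, hφx₀, hFφ⟩ :=
    (hF.contDiffAt (x := (x₀, γ₀))).exists_isOpen_contDiffOn_implicitFunction_of_hasDerivAt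
      one_ne_zero hslice hgrad
  have hF₀ : F (x₀, γ₀) = 0 := sub_eq_zero.2 hroot
  exact ⟨U, hUo, hx₀, φ, hφ, hφx₀, fun x hx => sub_eq_zero.1 ((hFφ x hx).trans hF₀)⟩

/-- Implicit function theorem for the scaling factor: if `V (γ₀ • f̂ x₀) = β * V x₀`
and `⟪∇V (γ₀ • f̂ x₀), f̂ x₀⟫ ≠ 0`, then on a neighborhood `U` of `x₀` there is a
`C¹` function `φ` with `φ x₀ = γ₀` and `V (φ x • f̂ x) = β * V x` on `U`. -/
theorem stmt_8 {n : ℕ} (V : EuclideanSpace ℝ (Fin n) → ℝ)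
    (fhat : EuclideanSpace ℝ (Fin n) → EuclideanSpace ℝ (Fin n))
    (hV : ContDiff ℝ 1 V) (hfhat : ContDiff ℝ 1 fhat)
    (β : ℝ) (hβ : β ∈ Set.Ioo (0 : ℝ) 1)
    (x₀ : EuclideanSpace ℝ (Fin n)) (γ₀ : ℝ)
    (hroot : V (γ₀ • fhat x₀) = β * V x₀)
    (hgrad : (inner ℝ (gradient V (γ₀ • fhat x₀)) (fhat x₀) : ℝ) ≠ 0) :
    ∃ U : Set (EuclideanSpace ℝ (Fin n)), IsOpen U ∧ x₀ ∈ U ∧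
      ∃ φ : EuclideanSpace ℝ (Fin n) → ℝ, ContDiffOn ℝ 1 φ U ∧ φ x₀ = γ₀ ∧
        ∀ x ∈ U, V (φ x • fhat x) = β * V x :=
  stmt_8_general V fhat hV hfhat β x₀ γ₀ hroot hgrad
end

section
/- Let V : ℝ^n → ℝ and f̂ : ℝ^n → ℝ^n be continuously differentiable, with V(0) = 0, V(y) > 0 for y ≠ 0, and assume for every x the function h(γ) = V(γ·f̂(x)) has h'(γ) > 0 for all γ > 0 whenever f̂(x) ≠ 0. Let β ∈ (0,1) and let γ : ℝ^n → ℝ be a function satisfying: γ(x) = 1 whenever V(f̂(x)) ≤ β·V(x), and γ(x) ∈ (0,1) with V(γ(x)·f̂(x)) = β·V(x) whenever V(f̂(x)) > β·V(x). Then the dynamic model f(x) = γ(x)·f̂(x) is continuous on ℝ^n. -/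
/-!
Away from the zeros of `f̂`, the scaling `γ x` is the root in `(0, 1]` of the function
`s ↦ V (s • f̂ x) - β V x`, clamped to `1` when this function is still nonpositive at `1`.
The function is continuous in `x` and strictly increasing in `s`, so the clamped root depends
continuously on `x`: strict inequalities at `s = a < γ x₀` and `s = b > γ x₀` persist near `x₀`.
At a zero of `f̂`, continuity of `γ • f̂` follows from `0 < γ ≤ 1` alone.
-/

open Filter Set Topology

section ClampedRoot

variable {X : Type*} [TopologicalSpace X] {F : X → ℝ → ℝ} {g : X → ℝ} {x₀ : X} {l u : ℝ}

theorem continuousAt_clampedRoot (hF : ∀ s, ContinuousAt (fun x => F x s) x₀)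
    (hmono : ∀ᶠ x in 𝓝 x₀, StrictMonoOn (F x) (Ioc l u)) (hg : ∀ x, g x ∈ Ioc l u)
    (hroot : ∀ x, (g x = u ∧ F x u ≤ 0) ∨ F x (g x) = 0) :
    ContinuousAt g x₀ := by
  have hg₀ := hg x₀
  have hmono₀ := hmono.self_of_nhds
  have hF_le : F x₀ (g x₀) ≤ 0 := by
    rcases hroot x₀ with ⟨hu, hFu⟩ | h
    · rwa [hu]
    · exact h.le
  refine tendsto_order.2 ⟨fun a ha => ?_, fun b hb => ?_⟩
  · rcases le_or_gt a l with hal | hla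
    · exact Eventually.of_forall fun x => hal.trans_lt (hg x).1
    have ha_mem : a ∈ Ioc l u := ⟨hla, ha.le.trans hg₀.2⟩
    have hFa : ∀ᶠ x in 𝓝 x₀, F x a < 0 :=
      (hF a).eventually_lt continuousAt_const ((hmono₀ ha_mem hg₀ ha).trans_le hF_le)
    filter_upwards [hFa, hmono] with x hFa hmono
    rcases hroot x with ⟨hu, -⟩ | h
    · exact hu ▸ ha.trans_le hg₀.2
    · exact (hmono.lt_iff_lt ha_mem (hg x)).1 (h ▸ hFa)
  · rcases le_or_gt b u with hbu | hub
    swap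
    · exact Eventually.of_forall fun x => (hg x).2.trans_lt hub
    have hb_mem : b ∈ Ioc l u := ⟨hg₀.1.trans hb, hbu⟩
    have hF₀ : F x₀ (g x₀) = 0 := by
      rcases hroot x₀ with ⟨hu, -⟩ | h
      · exact absurd (hu ▸ hb) hbu.not_gt
      · exact h
    have hFb : ∀ᶠ x in 𝓝 x₀, 0 < F x b :=
      continuousAt_const.eventually_lt (hF b) (hF₀ ▸ hmono₀ hg₀ hb_mem hb)
    filter_upwards [hFb, hmono] with x hFb hmono
    rcases hroot x with ⟨-, hFu⟩ | h
    · exact absurd ((hmono.monotoneOn hb_mem ⟨hb_mem.1.trans_le hbu, le_rfl⟩ hbu).trans hFu)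
        hFb.not_ge
    · exact (hmono.lt_iff_lt (hg x) hb_mem).1 (h ▸ hFb)

end ClampedRoot

theorem strictMonoOn_comp_smul_of_deriv_pos {E : Type*} [NormedAddCommGroup E] [NormedSpace ℝ E]
    {V : E → ℝ} (hV : Continuous V) (v : E)
    (hderiv : ∀ s : ℝ, 0 < s → 0 < deriv (fun s : ℝ => V (s • v)) s) :
    StrictMonoOn (fun s : ℝ => V (s • v)) (Ioi 0) :=
  strictMonoOn_of_deriv_pos (convex_Ioi 0) (by fun_prop)
    (fun s hs => hderiv s (interior_subset hs))

theorem stmt_9_general {n : ℕ} (V : EuclideanSpace ℝ (Fin n) → ℝ)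
    (fhat : EuclideanSpace ℝ (Fin n) → EuclideanSpace ℝ (Fin n))
    (hV : ContDiff ℝ 1 V) (hfhat : ContDiff ℝ 1 fhat)
    (hderiv : ∀ x : EuclideanSpace ℝ (Fin n), fhat x ≠ 0 → ∀ γ : ℝ, 0 < γ →
      0 < deriv (fun s : ℝ => V (s • fhat x)) γ)
    (β : ℝ)
    (γ : EuclideanSpace ℝ (Fin n) → ℝ)
    (hγ₁ : ∀ x, V (fhat x) ≤ β * V x → γ x = 1)
    (hγ₂ : ∀ x, ¬ V (fhat x) ≤ β * V x →
      γ x ∈ Set.Ioo (0 : ℝ) 1 ∧ V (γ x • fhat x) = β * V x) :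
    Continuous (fun x => γ x • fhat x) := by
  have hVc := hV.continuous
  have hfc := hfhat.continuous
  have hγ_mem : ∀ x, γ x ∈ Ioc 0 1 := fun x => by
    by_cases h : V (fhat x) ≤ β * V x
    · simp [hγ₁ x h]
    · exact Ioo_subset_Ioc_self (hγ₂ x h).1
  refine continuous_iff_continuousAt.2 fun x₀ => ?_
  by_cases h₀ : fhat x₀ = 0
  · have hγ_bdd : IsBoundedUnder (· ≤ ·) (𝓝 x₀) (norm ∘ γ) :=
      isBoundedUnder_of ⟨1, fun x => abs_le.2 ⟨by linarith [(hγ_mem x).1], (hγ_mem x).2⟩⟩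
    simpa [ContinuousAt, h₀] using hγ_bdd.smul_tendsto_zero (h₀ ▸ hfc.tendsto x₀)
  refine (?_ : ContinuousAt γ x₀).smul hfc.continuousAt
  refine continuousAt_clampedRoot (F := fun x s => V (s • fhat x) - β * V x)
    (fun s => by fun_prop) ?_ hγ_mem fun x => ?_
  · filter_upwards [hfc.continuousAt.eventually_ne h₀] with x hx
    exact ((strictMonoOn_comp_smul_of_deriv_pos hVc (fhat x) (hderiv x hx)).mono
      Ioc_subset_Ioi_self).add_const _
  · by_cases h : V (fhat x) ≤ β * V x
    · exact .inl ⟨hγ₁ x h, by simpa using h⟩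
    · exact .inr (sub_eq_zero.2 (hγ₂ x h).2)

/-- Continuity of the implicit stable dynamic model: under the stated regularity
and monotonicity-along-rays hypotheses, the piecewise model
`f x = γ x • f̂ x` (with `γ x = 1` in the sufficient-decrease case and `γ x` the
implicit root otherwise) is continuous. -/
theorem stmt_9 {n : ℕ} (V : EuclideanSpace ℝ (Fin n) → ℝ)
    (fhat : EuclideanSpace ℝ (Fin n) → EuclideanSpace ℝ (Fin n))
    (hV : ContDiff ℝ 1 V) (hfhat : ContDiff ℝ 1 fhat)
    (hV0 : V 0 = 0) (hVpos : ∀ y : EuclideanSpace ℝ (Fin n), y ≠ 0 → 0 < V y)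
    (hderiv : ∀ x : EuclideanSpace ℝ (Fin n), fhat x ≠ 0 → ∀ γ : ℝ, 0 < γ →
      0 < deriv (fun s : ℝ => V (s • fhat x)) γ)
    (β : ℝ) (hβ : β ∈ Set.Ioo (0 : ℝ) 1)
    (γ : EuclideanSpace ℝ (Fin n) → ℝ)
    (hγ₁ : ∀ x, V (fhat x) ≤ β * V x → γ x = 1)
    (hγ₂ : ∀ x, ¬ V (fhat x) ≤ β * V x →
      γ x ∈ Set.Ioo (0 : ℝ) 1 ∧ V (γ x • fhat x) = β * V x) :
    Continuous (fun x => γ x • fhat x) :=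
  stmt_9_general V fhat hV hfhat hderiv β γ hγ₁ hγ₂
end

section
/- Let (Ω, 𝒜, P) be a probability space with a filtration (ℱ_t)_{t∈ℕ}, let (x_t)_{t∈ℕ} be an ℝ^n-valued process adapted to (ℱ_t) with E[‖x_t‖^a] finite for all t, let V : ℝ^n → ℝ, a > 0, c₁ > 0, and β ∈ (0,1). Assume c₁‖y‖^a ≤ V(y) for all y, V(x_t) is integrable for all t, and E[V(x_{t+1}) | ℱ_t] ≤ β·V(x_t) almost surely for every t. Then x_t → 0 almost surely as t → ∞. -/
/-!
Taking expectations in the supermartingale-type inequality gives `E[V(x_t)] ≤ βᵗ E[V(x_0)]`.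
Since `V ≥ 0`, these expectations are summable, so `∑ₜ V(x_t)` is finite almost surely and
`V(x_t) → 0` almost surely; coercivity `c₁‖y‖ᵃ ≤ V(y)` then forces `x_t → 0`.
-/

open MeasureTheory Filter Topology

namespace MeasureTheory

variable {Ω E : Type*} {m : MeasurableSpace Ω} {μ : Measure Ω}

theorem ae_summable_norm_of_summable_integral_norm [NormedAddCommGroup E] {ι : Type*}
    [Countable ι] {f : ι → Ω → E} (hf : ∀ i, Integrable (f i) μ)
    (h : Summable fun i => ∫ ω, ‖f i ω‖ ∂μ) :
    ∀ᵐ ω ∂μ, Summable fun i => ‖f i ω‖ := by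
  refine summable_norm_of_tsum_eLpNorm_ne_top le_rfl (fun i => (hf i).1) ?_
  simp_rw [eLpNorm_one_eq_lintegral_enorm, ← ofReal_integral_norm_eq_lintegral_enorm (hf _),
    ← ENNReal.ofReal_tsum_of_nonneg (fun i => integral_nonneg fun ω => norm_nonneg (f i ω)) h]
  exact ENNReal.ofReal_ne_top

theorem ae_tendsto_zero_of_summable_integral {f : ℕ → Ω → ℝ} (hf : ∀ t, Integrable (f t) μ)
    (hf_nonneg : ∀ t ω, 0 ≤ f t ω) (h : Summable fun t => ∫ ω, f t ω ∂μ) :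
    ∀ᵐ ω ∂μ, Tendsto (fun t => f t ω) atTop (𝓝 0) := by
  have hnorm (t : ℕ) (ω : Ω) : ‖f t ω‖ = f t ω := Real.norm_of_nonneg (hf_nonneg t ω)
  have hsum := ae_summable_norm_of_summable_integral_norm hf (by simpa only [hnorm] using h)
  filter_upwards [hsum] with ω hω
  simpa only [hnorm] using hω.tendsto_atTop_zero

theorem integral_le_geom_of_condExp_le {ℱ : Filtration ℕ m} [SigmaFiniteFiltration μ ℱ]
    {f : ℕ → Ω → ℝ} {β : ℝ} (hβ : 0 ≤ β) (hf : ∀ t, Integrable (f t) μ)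
    (hcond : ∀ t, μ[f (t + 1) | ℱ t] ≤ᵐ[μ] fun ω => β * f t ω) (t : ℕ) :
    ∫ ω, f t ω ∂μ ≤ β ^ t * ∫ ω, f 0 ω ∂μ := by
  refine le_geom (u := fun t => ∫ ω, f t ω ∂μ) hβ t fun k _ => ?_
  calc ∫ ω, f (k + 1) ω ∂μ = ∫ ω, (μ[f (k + 1) | ℱ k]) ω ∂μ := (integral_condExp (ℱ.le k)).symm
    _ ≤ ∫ ω, β * f k ω ∂μ := integral_mono_ae integrable_condExp ((hf k).const_mul β) (hcond k)
    _ = β * ∫ ω, f k ω ∂μ := integral_const_mul β _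

end MeasureTheory

theorem tendsto_zero_of_mul_norm_rpow_le {E : Type*} [SeminormedAddCommGroup E] {y : ℕ → E} {v : ℕ → ℝ}
    {a c : ℝ} (ha : 0 < a) (hc : 0 < c) (hle : ∀ t, c * ‖y t‖ ^ a ≤ v t)
    (hv : Tendsto v atTop (𝓝 0)) : Tendsto y atTop (𝓝 0) := by
  have hpow : Tendsto (fun t => ‖y t‖ ^ a) atTop (𝓝 0) := by
    refine squeeze_zero (fun t => by positivity) (fun t => ?_) (by simpa using hv.div_const c)
    rw [le_div_iff₀' hc]
    exact hle t
  rw [tendsto_zero_iff_norm_tendsto_zero]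
  refine (hpow.rpow_const_nhds_zero (inv_pos.2 ha)).congr fun t => ?_
  exact Real.rpow_rpow_inv (norm_nonneg _) ha.ne'

theorem stmt_12_general {n : ℕ} {Ω : Type*} {m : MeasurableSpace Ω} (P : Measure Ω)
    [IsProbabilityMeasure P] (ℱ : Filtration ℕ m)
    (x : ℕ → Ω → EuclideanSpace ℝ (Fin n))
    (V : EuclideanSpace ℝ (Fin n) → ℝ) (a c₁ β : ℝ)
    (ha : 0 < a) (hc₁ : 0 < c₁) (hβ : β ∈ Set.Ioo (0 : ℝ) 1)
    (hVlb : ∀ y, c₁ * ‖y‖ ^ a ≤ V y)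
    (hVint : ∀ t, Integrable (fun ω => V (x t ω)) P)
    (hcond : ∀ t, ∀ᵐ ω ∂P, (P[fun ω => V (x (t + 1) ω) | ℱ t]) ω ≤ β * V (x t ω)) :
    ∀ᵐ ω ∂P, Tendsto (fun t => x t ω) atTop (nhds 0) := by
  have hV_nonneg (y) : 0 ≤ V y := le_trans (by positivity) (hVlb y)
  have hsum : Summable fun t => ∫ ω, V (x t ω) ∂P :=
    ((summable_geometric_of_lt_one hβ.1.le hβ.2).mul_right _).of_nonneg_of_le
      (fun t => integral_nonneg fun ω => hV_nonneg _)
      (integral_le_geom_of_condExp_le (f := fun t ω => V (x t ω)) hβ.1.le hVint hcond)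
  filter_upwards [ae_tendsto_zero_of_summable_integral hVint (fun t ω => hV_nonneg _) hsum]
    with ω hω
  exact tendsto_zero_of_mul_norm_rpow_le ha hc₁ (fun t => hVlb (x t ω)) hω

/-- Almost-sure asymptotic convergence of the state for the stochastic Lyapunov
stability theorem: a coercive Lyapunov function `V` with stepwise expected
contraction along the adapted process `x` forces `x t → 0` almost surely. -/
theorem stmt_12 {n : ℕ} {Ω : Type*} {m : MeasurableSpace Ω} (P : Measure Ω)
    [IsProbabilityMeasure P] (ℱ : Filtration ℕ m)
    (x : ℕ → Ω → EuclideanSpace ℝ (Fin n))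
    (V : EuclideanSpace ℝ (Fin n) → ℝ) (a c₁ β : ℝ)
    (ha : 0 < a) (hc₁ : 0 < c₁) (hβ : β ∈ Set.Ioo (0 : ℝ) 1)
    (hadapted : Adapted ℱ x)
    (hmom : ∀ t, Integrable (fun ω => ‖x t ω‖ ^ a) P)
    (hVlb : ∀ y, c₁ * ‖y‖ ^ a ≤ V y)
    (hVint : ∀ t, Integrable (fun ω => V (x t ω)) P)
    (hcond : ∀ t, ∀ᵐ ω ∂P, (P[fun ω => V (x (t + 1) ω) | ℱ t]) ω ≤ β * V (x t ω)) :
    ∀ᵐ ω ∂P, Tendsto (fun t => x t ω) atTop (nhds 0) :=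
  stmt_12_general P ℱ x V a c₁ β ha hc₁ hβ hVlb hVint hcond
end
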